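/- Suppose that for some r > 0 every self-adjoint x ∈ M_n ⊗ M_{2k} with ‖x‖ ≤ r satisfies that 1 ⊗ 1 − x is separable (for all k). Then every positive contractive linear map φ : M_n(ℂ) → M_m(ℂ) satisfies ‖Id_{M_k} ⊗ φ‖ ≤ 1/r for all k, i.e. ‖φ‖_cb ≤ 1/r. -/

import Mathlib

open Matrix ComplexOrder Kronecker
open scoped Matrix.Norms.L2Operator

/-- The separable elements of `Mₙ(ℂ) ⊗ M_m(ℂ)`. -/
def Separable (n m : ℕ) : Set (Matrix (Fin n × Fin m) (Fin n × Fin m) ℂ) :=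
  closure {X | ∃ (N : ℕ) (P : Fin N → Matrix (Fin n) (Fin n) ℂ)
    (Q : Fin N → Matrix (Fin m) (Fin m) ℂ),
    (∀ t, (P t).PosSemidef) ∧ (∀ t, (Q t).PosSemidef) ∧ X = ∑ t, P t ⊗ₖ Q t}

/-- The `k`-th amplification `Id_{M_k} ⊗ φ` of a map `φ : Mₙ(ℂ) → M_m(ℂ)`. -/
def amp {n m : ℕ} (φ : Matrix (Fin n) (Fin n) ℂ → Matrix (Fin m) (Fin m) ℂ) (k : ℕ)
    (M : Matrix (Fin k × Fin n) (Fin k × Fin n) ℂ) :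
    Matrix (Fin k × Fin m) (Fin k × Fin m) ℂ :=
  fun p q => φ (fun a b => M (p.1, a) (q.1, b)) p.2 q.2

/-!
By homogeneity we may assume `‖M‖ ≤ 1`. Then the Hermitian dilation `D = [[0, Mᴴ], [M, 0]]`
satisfies `-1 ≤ D ≤ 1` by a Schur complement argument, so `1 ± r D` are separable. Since `φ` is
positive, `Id ⊗ φ` maps separable elements to positive ones, whence `1 ⊗ φ 1 ± r (Id ⊗ φ) D ≥ 0`;
as `φ 1 ≤ 1` this gives `‖(Id ⊗ φ) D‖ ≤ 1 / r`. Finally `(Id ⊗ φ) M` is an off-diagonal block of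
`(Id ⊗ φ) D`, and compressions do not increase the operator norm.
-/

open scoped MatrixOrder

lemma LinearMap.norm_apply_le_of_forall_norm_le_one {𝕜 E F : Type*} [RCLike 𝕜]
    [NormedAddCommGroup E] [NormedSpace 𝕜 E] [SeminormedAddCommGroup F] [NormedSpace 𝕜 F]
    (f : E →ₗ[𝕜] F) {C : ℝ} (h : ∀ x, ‖x‖ ≤ 1 → ‖f x‖ ≤ C) (x : E) : ‖f x‖ ≤ C * ‖x‖ := by
  rcases eq_or_ne x 0 with rfl | hx
  · simp
  have hunit := h _ (norm_smul_inv_norm (𝕜 := 𝕜) hx).le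
  rw [map_smul, norm_smul, norm_inv, RCLike.norm_ofReal, abs_norm,
    inv_mul_le_iff₀ (norm_pos_iff.2 hx)] at hunit
  linarith

lemma CStarAlgebra.norm_le_one_of_neg_one_le_of_le_one {A : Type*} [CStarAlgebra A]
    [PartialOrder A] [StarOrderedRing A] {a : A} (h₁ : -1 ≤ a) (h₂ : a ≤ 1) : ‖a‖ ≤ 1 := by
  have ha : IsSelfAdjoint a := by
    simpa using (IsSelfAdjoint.one A).sub (IsSelfAdjoint.of_nonneg (sub_nonneg.2 h₂))
  rcases subsingleton_or_nontrivial A with _ | _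
  · simp [Subsingleton.elim a 0]
  rcases norm_or_neg_norm_mem_spectrum ha with h | h
  · exact (le_algebraMap_iff_spectrum_le (r := (1 : ℝ)) ha).1 (by simpa using h₂) _ h
  · have := (algebraMap_le_iff_le_spectrum (r := (-1 : ℝ)) ha).1 (by simpa using h₁) _ h
    linarith

namespace Matrix

section L2OpNorm

variable {𝕜 : Type*} [RCLike 𝕜] {l m n o : Type*} [Fintype l] [Fintype m] [Fintype n]
  [Fintype o] [DecidableEq l] [DecidableEq m] [DecidableEq n] [DecidableEq o]

lemma l2_opNorm_one_le : ‖(1 : Matrix n n 𝕜)‖ ≤ 1 := by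
  have h := l2_opNorm_conjTranspose_mul_self (1 : Matrix n n 𝕜)
  rw [conjTranspose_one, Matrix.one_mul] at h
  nlinarith [norm_nonneg (1 : Matrix n n 𝕜)]

lemma l2_opNorm_one_submatrix_le {f : n → m} (hf : Function.Injective f) :
    ‖(1 : Matrix m m 𝕜).submatrix id f‖ ≤ 1 := by
  set P := (1 : Matrix m m 𝕜).submatrix id f
  have hP : Pᴴ * P = 1 := by
    rw [conjTranspose_submatrix, conjTranspose_one,
      ← submatrix_mul _ _ _ _ _ Function.bijective_id, Matrix.one_mul, submatrix_one _ hf]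
  have h := l2_opNorm_conjTranspose_mul_self P
  rw [hP] at h
  nlinarith [norm_nonneg P, l2_opNorm_one_le (𝕜 := 𝕜) (n := n)]

lemma l2_opNorm_submatrix_le (A : Matrix m n 𝕜) {f : l → m} {g : o → n}
    (hf : Function.Injective f) (hg : Function.Injective g) : ‖A.submatrix f g‖ ≤ ‖A‖ := by
  have hA : A.submatrix f g =
      ((1 : Matrix m m 𝕜).submatrix id f)ᴴ * A * (1 : Matrix n n 𝕜).submatrix id g := by
    ext i j
    simp [Matrix.mul_apply, one_apply]
  calc ‖A.submatrix f g‖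
      ≤ ‖((1 : Matrix m m 𝕜).submatrix id f)ᴴ‖ * ‖A‖ * ‖(1 : Matrix n n 𝕜).submatrix id g‖ := by
        rw [hA]
        exact (l2_opNorm_mul _ _).trans
          (mul_le_mul_of_nonneg_right (l2_opNorm_mul _ _) (norm_nonneg _))
    _ ≤ 1 * ‖A‖ * 1 := by
        rw [l2_opNorm_conjTranspose]
        gcongr
        exacts [l2_opNorm_one_submatrix_le hf, l2_opNorm_one_submatrix_le hg]
    _ = ‖A‖ := by ring

end L2OpNorm

variable {n : Type*} [Fintype n] [DecidableEq n]

lemma posSemidef_fromBlocks_one_of_norm_le_one {B : Matrix n n ℂ} (hB : ‖B‖ ≤ 1) :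
    (fromBlocks 1 B Bᴴ 1).PosSemidef := by
  have : Invertible (1 : Matrix n n ℂ) := invertibleOne
  rw [PosDef.fromBlocks₁₁ B 1 PosDef.one, inv_one, Matrix.mul_one, ← le_iff]
  refine (CStarAlgebra.norm_le_one_iff_of_nonneg (star B * B) (star_mul_self_nonneg B)).1 ?_
  rw [CStarRing.norm_star_mul_self]
  nlinarith [norm_nonneg B]

lemma l2_opNorm_fromBlocks_zero_le_one {M : Matrix n n ℂ} (hM : ‖M‖ ≤ 1) :
    ‖fromBlocks 0 Mᴴ M 0‖ ≤ 1 := by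
  refine CStarAlgebra.norm_le_one_of_neg_one_le_of_le_one (le_iff.2 ?_) (le_iff.2 ?_)
  · have h := posSemidef_fromBlocks_one_of_norm_le_one (B := Mᴴ)
      (by rwa [l2_opNorm_conjTranspose])
    rw [← fromBlocks_one, sub_neg_eq_add, fromBlocks_add]
    simpa only [zero_add, add_zero, conjTranspose_conjTranspose] using h
  · have h := posSemidef_fromBlocks_one_of_norm_le_one (B := -Mᴴ)
      (by rwa [norm_neg, l2_opNorm_conjTranspose])
    rw [← fromBlocks_one, sub_eq_add_neg, fromBlocks_neg, fromBlocks_add]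
    simpa only [zero_add, add_zero, neg_zero, conjTranspose_neg, conjTranspose_conjTranspose]
      using h

end Matrix

section Amplification

variable {n m : ℕ} (φ : Matrix (Fin n) (Fin n) ℂ →ₗ[ℂ] Matrix (Fin m) (Fin m) ℂ) (k : ℕ)

def ampLinearMap :
    Matrix (Fin k × Fin n) (Fin k × Fin n) ℂ →ₗ[ℂ] Matrix (Fin k × Fin m) (Fin k × Fin m) ℂ :=
  (compLinearEquiv _ _ _ _ ℂ ℂ).toLinearMap ∘ₗ φ.mapMatrix ∘ₗ
    (compLinearEquiv _ _ _ _ ℂ ℂ).symm.toLinearMap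

@[simp]
lemma ampLinearMap_apply (M : Matrix (Fin k × Fin n) (Fin k × Fin n) ℂ) :
    ampLinearMap φ k M = amp (φ ·) k M := rfl

variable {k}

lemma amp_kronecker (Q : Matrix (Fin k) (Fin k) ℂ) (P : Matrix (Fin n) (Fin n) ℂ) :
    amp (φ ·) k (Q ⊗ₖ P) = Q ⊗ₖ φ P := by
  ext p q
  have : (fun a b => (Q ⊗ₖ P) (p.1, a) (q.1, b)) = Q p.1 q.1 • P := by
    ext a b; simp
  change φ (fun a b => (Q ⊗ₖ P) (p.1, a) (q.1, b)) p.2 q.2 = _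
  rw [this, map_smul]
  rfl

lemma posSemidef_amp_of_mem_separable
    (hpos : ∀ M : Matrix (Fin n) (Fin n) ℂ, M.PosSemidef → (φ M).PosSemidef)
    {X : Matrix (Fin n × Fin k) (Fin n × Fin k) ℂ} (hX : X ∈ Separable n k) :
    (amp (φ ·) k (X.submatrix Prod.swap Prod.swap)).PosSemidef := by
  let L := ampLinearMap φ k ∘ₗ
    (reindexLinearEquiv ℂ ℂ (Equiv.prodComm _ _) (Equiv.prodComm _ _)).toLinearMap
  have hL : ∀ X, L X = amp (φ ·) k (X.submatrix Prod.swap Prod.swap) := fun _ => rfl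
  suffices Set.MapsTo L (Separable n k) {A | 0 ≤ A} from hL X ▸ (this hX).posSemidef
  refine Set.MapsTo.closure_left ?_ L.continuous_of_finiteDimensional
    CStarAlgebra.isClosed_nonneg
  rintro _ ⟨N, P, Q, hP, hQ, rfl⟩
  have hL_kronecker : ∀ t, L (P t ⊗ₖ Q t) = Q t ⊗ₖ φ (P t) := fun t => by
    rw [hL, ← amp_kronecker]
    congr 1
    ext
    simp [mul_comm]
  rw [Set.mem_ofPred_eq, map_sum]
  simp only [hL_kronecker]
  exact (posSemidef_sum _ fun t _ => (hQ t).kronecker (hpos _ (hP t))).nonneg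

lemma norm_amp_le_one_of_mem_separable
    (hpos : ∀ M : Matrix (Fin n) (Fin n) ℂ, M.PosSemidef → (φ M).PosSemidef)
    (hφ : ‖φ 1‖ ≤ 1) {x : Matrix (Fin n × Fin k) (Fin n × Fin k) ℂ}
    (h₁ : 1 - x ∈ Separable n k) (h₂ : 1 + x ∈ Separable n k) :
    ‖amp (φ ·) k (x.submatrix Prod.swap Prod.swap)‖ ≤ 1 := by
  have hφ_le : φ 1 ≤ 1 :=
    (CStarAlgebra.norm_le_one_iff_of_nonneg _ (hpos 1 PosSemidef.one).nonneg).1 hφ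
  have hamp_one : amp (φ ·) k 1 ≤ 1 := by
    have hamp : amp (φ ·) k 1 = 1 ⊗ₖ φ 1 := by rw [← amp_kronecker, one_kronecker_one]
    have hkron : 1 - (1 : Matrix (Fin k) (Fin k) ℂ) ⊗ₖ φ 1 = 1 ⊗ₖ (1 - φ 1) := by
      rw [← one_kronecker_one]
      ext
      simp only [Matrix.sub_apply, kroneckerMap_apply, mul_sub]
    rw [le_iff, hamp, hkron]
    exact PosSemidef.one.kronecker hφ_le
  have hsub := (posSemidef_amp_of_mem_separable φ hpos h₁).nonneg
  have hadd := (posSemidef_amp_of_mem_separable φ hpos h₂).nonneg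
  rw [submatrix_sub, Pi.sub_apply, Pi.sub_apply, submatrix_one _ Prod.swap_injective,
    ← ampLinearMap_apply, map_sub] at hsub
  rw [submatrix_add, Pi.add_apply, Pi.add_apply, submatrix_one _ Prod.swap_injective,
    ← ampLinearMap_apply, map_add] at hadd
  refine CStarAlgebra.norm_le_one_of_neg_one_le_of_le_one ?_ ?_
  · exact neg_le.1 ((neg_le_iff_add_nonneg.2 hadd).trans hamp_one)
  · exact (sub_nonneg.1 hsub).trans hamp_one

end Amplification

section Dilation

variable {k n : ℕ}

def finSumFinEquivTwoMul (k : ℕ) : Fin k ⊕ Fin k ≃ Fin (2 * k) :=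
  finSumFinEquiv.trans (finCongr (two_mul k).symm)

def finTwoMulProdEquiv (k n : ℕ) : Fin (2 * k) × Fin n ≃ (Fin k × Fin n) ⊕ (Fin k × Fin n) :=
  ((finSumFinEquivTwoMul k).symm.prodCongr (Equiv.refl _)).trans (Equiv.sumProdDistrib _ _ _)

def dilation (M : Matrix (Fin k × Fin n) (Fin k × Fin n) ℂ) :
    Matrix (Fin (2 * k) × Fin n) (Fin (2 * k) × Fin n) ℂ :=
  (fromBlocks 0 Mᴴ M 0).submatrix (finTwoMulProdEquiv k n) (finTwoMulProdEquiv k n)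

variable (M : Matrix (Fin k × Fin n) (Fin k × Fin n) ℂ)

lemma dilation_isHermitian : (dilation M).IsHermitian :=
  (IsHermitian.fromBlocks (by simp) (by simp) (by simp)).submatrix _

lemma l2_opNorm_dilation_le_one (hM : ‖M‖ ≤ 1) : ‖dilation M‖ ≤ 1 :=
  (l2_opNorm_submatrix_le _ (Equiv.injective _) (Equiv.injective _)).trans
    (l2_opNorm_fromBlocks_zero_le_one hM)

lemma amp_eq_submatrix_amp_dilation {m : ℕ}
    (φ : Matrix (Fin n) (Fin n) ℂ → Matrix (Fin m) (Fin m) ℂ) :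
    amp φ k M = (amp φ (2 * k) (dilation M)).submatrix
      (Prod.map (finSumFinEquivTwoMul k ∘ .inr) id)
      (Prod.map (finSumFinEquivTwoMul k ∘ .inl) id) := by
  ext p q
  simp [amp, dilation, finTwoMulProdEquiv]

lemma norm_amp_le_norm_amp_dilation {m : ℕ}
    (φ : Matrix (Fin n) (Fin n) ℂ → Matrix (Fin m) (Fin m) ℂ) :
    ‖amp φ k M‖ ≤ ‖amp φ (2 * k) (dilation M)‖ := by
  rw [amp_eq_submatrix_amp_dilation]
  exact l2_opNorm_submatrix_le _
    (((Equiv.injective _).comp Sum.inr_injective).prodMap Function.injective_id)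
    (((Equiv.injective _).comp Sum.inl_injective).prodMap Function.injective_id)

end Dilation

/-- if for some `r > 0`, for all `k`, every self-adjoint
`x ∈ Mₙ ⊗ M_{2k}` with `‖x‖ ≤ r` has `1 ⊗ 1 − x` separable, then every positive
contractive linear map `φ : Mₙ(ℂ) → M_m(ℂ)` satisfies `‖φ‖_cb ≤ 1/r`. -/
theorem stmt10 (n m : ℕ) (r : ℝ) (hr : 0 < r)
    (hsep : ∀ (k : ℕ) (x : Matrix (Fin n × Fin (2 * k)) (Fin n × Fin (2 * k)) ℂ),
      x.IsHermitian → ‖x‖ ≤ r → (1 - x) ∈ Separable n (2 * k))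
    (φ : Matrix (Fin n) (Fin n) ℂ →ₗ[ℂ] Matrix (Fin m) (Fin m) ℂ)
    (hpos : ∀ M : Matrix (Fin n) (Fin n) ℂ, M.PosSemidef → (φ M).PosSemidef)
    (hcontr : ∀ M : Matrix (Fin n) (Fin n) ℂ, ‖φ M‖ ≤ ‖M‖) :
    ∀ (k : ℕ) (M : Matrix (Fin k × Fin n) (Fin k × Fin n) ℂ),
      ‖amp (φ ·) k M‖ ≤ (1 / r) * ‖M‖ := by
  intro k
  refine (ampLinearMap φ k).norm_apply_le_of_forall_norm_le_one fun M hM => ?_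
  set x := (r • dilation M).submatrix Prod.swap Prod.swap
  have hx : x.IsHermitian := ((dilation_isHermitian M).smul (IsSelfAdjoint.all r)).submatrix _
  have hx_norm : ‖x‖ ≤ r := by
    refine (l2_opNorm_submatrix_le _ Prod.swap_injective Prod.swap_injective).trans ?_
    rw [norm_smul, Real.norm_of_nonneg hr.le]
    exact mul_le_of_le_one_right hr.le (l2_opNorm_dilation_le_one M hM)
  have hamp := norm_amp_le_one_of_mem_separable φ hpos ((hcontr 1).trans l2_opNorm_one_le)
    (hsep k x hx hx_norm) (by simpa using hsep k (-x) hx.neg (by rwa [norm_neg]))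
  rw [submatrix_submatrix, Prod.swap_swap_eq, submatrix_id_id, ← ampLinearMap_apply,
    LinearMap.map_smul_of_tower, norm_smul, Real.norm_of_nonneg hr.le] at hamp
  rw [ampLinearMap_apply, le_div_iff₀ hr, mul_comm]
  exact (mul_le_mul_of_nonneg_left (norm_amp_le_norm_amp_dilation M _) hr.le).trans hamp
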